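/- Fix a ∈ (0, π/3) and a function q : ℝ → ℂ, square-integrable on (0, π), with q(x) = 0 for all x outside (a, π) and q(x) = 0 for almost every x ∈ (3a, π). Define Q_0(x) = (∫_{x+a/2}^{3a} q(t) dt)(∫_a^{x−a/2} q(τ) dτ) − ∫_a^{7a/2−x} q(t) (∫_{x+t−a/2}^{3a} q(τ) dτ) dt for x ∈ (3a/2, 5a/2), and set w_0(x) = q(x) for x ∈ (a, 3a/2) ∪ (5a/2, 3a) and w_0(x) = q(x) + Q_0(x) for x ∈ (3a/2, 5a/2). Then ∫_a^π q(x) dx = ∫_a^{3a} w_0(x) dx; equivalently, ∫_{3a/2}^{5a/2} Q_0(x) dx = 0. -/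

import Mathlib

open MeasureTheory Set
open scoped Real

noncomputable def Qfun (a : ℝ) (q : ℝ → ℂ) (ν : ℕ) (x : ℝ) : ℂ :=
  (∫ t in (x + a / 2)..(3 * a), q t) * (∫ τ in a..(x - a / 2), q τ)
    - (-1) ^ ν * ∫ t in a..(7 * a / 2 - x), q t * (∫ τ in (x + t - a / 2)..(3 * a), q τ)

noncomputable def wfun (a : ℝ) (q : ℝ → ℂ) (ν : ℕ) (x : ℝ) : ℂ :=
  if x ∈ Set.Ioo (3 * a / 2) (5 * a / 2) then q x + Qfun a q ν x else q x

/-!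
With `F u = ∫_u^{3a} q`, both terms of `Q₀` are integrals of `q t · F(·)` over triangles in the
`(x, t)`-plane. Integrating in `x` first, the substitution `u = x + a/2` (resp. `u = x + t - a/2`)
turns each into `∫_a^{2a} q t ∫_{t+a}^{3a} F u du dt`, so `∫ Q₀ = 0` for every integrable `q`.
-/

section Fubini

variable {α β E : Type*} [NormedAddCommGroup E] [NormedSpace ℝ E]

theorem integral_indicator_setOf_fst_snd [MeasurableSpace β] {ν : Measure β} {A : Set α}
    {B : α → Set β} (hB : ∀ x, MeasurableSet (B x)) (f : α × β → E) (x : α) :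
    ∫ y, {p : α × β | p.1 ∈ A ∧ p.2 ∈ B p.1}.indicator f (x, y) ∂ν
      = A.indicator (fun x => ∫ y in B x, f (x, y) ∂ν) x := by
  by_cases hx : x ∈ A
  · rw [indicator_of_mem hx, ← integral_indicator (hB x)]
    congr 1 with y
    by_cases hy : y ∈ B x <;> simp [hx, hy]
  · simp [indicator, hx]

theorem integral_indicator_setOf_snd_fst [MeasurableSpace α] {μ : Measure α} {A : Set β}
    {B : β → Set α} (hB : ∀ y, MeasurableSet (B y)) (f : α × β → E) (y : β) :
    ∫ x, {p : α × β | p.2 ∈ A ∧ p.1 ∈ B p.2}.indicator f (x, y) ∂μ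
      = A.indicator (fun y => ∫ x in B y, f (x, y) ∂μ) y := by
  by_cases hy : y ∈ A
  · rw [indicator_of_mem hy, ← integral_indicator (hB y)]
    congr 1 with x
    by_cases hx : x ∈ B y <;> simp [hx, hy]
  · simp [indicator, hy]

variable [MeasurableSpace α] [MeasurableSpace β] {μ : Measure α} {ν : Measure β} [SFinite ν]

theorem IntegrableOn.setIntegral_setOf_prod_left {A : Set α} {B : α → Set β}
    (hA : MeasurableSet A) (hB : ∀ x, MeasurableSet (B x))
    (hSm : MeasurableSet {p : α × β | p.1 ∈ A ∧ p.2 ∈ B p.1}) {f : α × β → E}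
    (hf : IntegrableOn f {p | p.1 ∈ A ∧ p.2 ∈ B p.1} (μ.prod ν)) :
    IntegrableOn (fun x => ∫ y in B x, f (x, y) ∂ν) A μ := by
  rw [← integrable_indicator_iff hSm] at hf
  rw [← integrable_indicator_iff hA]
  simpa only [integral_indicator_setOf_fst_snd hB] using hf.integral_prod_left

variable [SFinite μ]

theorem setIntegral_setIntegral_swap_of_setOf_eq {A : Set α} {B : α → Set β} {A' : Set β}
    {B' : β → Set α} (hA : MeasurableSet A) (hB : ∀ x, MeasurableSet (B x))
    (hA' : MeasurableSet A') (hB' : ∀ y, MeasurableSet (B' y))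
    (hS : {p : α × β | p.1 ∈ A ∧ p.2 ∈ B p.1} = {p | p.2 ∈ A' ∧ p.1 ∈ B' p.2})
    (hSm : MeasurableSet {p : α × β | p.1 ∈ A ∧ p.2 ∈ B p.1}) {f : α × β → E}
    (hf : IntegrableOn f {p | p.1 ∈ A ∧ p.2 ∈ B p.1} (μ.prod ν)) :
    ∫ x in A, ∫ y in B x, f (x, y) ∂ν ∂μ = ∫ y in A', ∫ x in B' y, f (x, y) ∂μ ∂ν := by
  rw [← integrable_indicator_iff hSm] at hf
  rw [← integral_indicator hA, ← integral_indicator hA']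
  simp_rw [← integral_indicator_setOf_fst_snd hB, ← integral_indicator_setOf_snd_fst hB', ← hS]
  rw [← integral_prod _ hf, integral_prod_symm _ hf]

theorem integrableOn_mul_of_subset_prod {𝕜 : Type*} [RCLike 𝕜] {I : Set α} (hI : μ I ≠ ⊤)
    {S : Set (α × β)} (hS : S ⊆ I ×ˢ univ) {g : β → 𝕜} (hg : Integrable g ν)
    {h : α × β → 𝕜} (hh : AEStronglyMeasurable h (μ.prod ν)) {C : ℝ} (hC : ∀ p, ‖h p‖ ≤ C) :
    IntegrableOn (fun p => g p.2 * h p) S (μ.prod ν) := by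
  refine IntegrableOn.mono_set ?_ hS
  have : IsFiniteMeasure (μ.restrict I) := isFiniteMeasure_restrict.2 hI
  rw [IntegrableOn, ← Measure.prod_restrict, Measure.restrict_univ]
  exact (hg.comp_snd _).mul_bdd
    (hh.mono_measure (Measure.prod_mono Measure.restrict_le_self le_rfl))
    (Filter.Eventually.of_forall hC)

end Fubini

theorem Integrable.of_memLp_restrict {α E : Type*} [MeasurableSpace α] [NormedAddCommGroup E]
    {μ : Measure α} {s : Set α} (hμs : μ s ≠ ⊤) {p : ENNReal} (hp : 1 ≤ p) {f : α → E}
    (hf : MemLp f p (μ.restrict s)) (h0 : ∀ x ∉ s, f x = 0) : Integrable f μ :=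
  have : IsFiniteMeasure (μ.restrict s) := isFiniteMeasure_restrict.2 hμs
  IntegrableOn.integrable_of_forall_notMem_eq_zero (hf.integrable hp) h0

section Qfun

variable {a : ℝ} {q : ℝ → ℂ}

theorem continuous_intervalIntegral_lower (hq : Integrable q) (b : ℝ) :
    Continuous fun s => ∫ τ in s..b, q τ :=
  (hq.continuous_primitive b).neg.congr fun _ => (intervalIntegral.integral_symm _ _).symm

theorem norm_intervalIntegral_le_integral_norm (hq : Integrable q) (s b : ℝ) :
    ‖∫ τ in s..b, q τ‖ ≤ ∫ t, ‖q t‖ :=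
  intervalIntegral.norm_integral_le_integral_norm_uIoc.trans
    (setIntegral_le_integral hq.norm (Filter.Eventually.of_forall fun _ => norm_nonneg _))

theorem integrableOn_mul_intervalIntegral_comp {S : Set (ℝ × ℝ)} {c d : ℝ}
    (hS : S ⊆ Ioc c d ×ˢ univ) (hq : Integrable q) {φ : ℝ × ℝ → ℝ} (hφ : Continuous φ) (b : ℝ) :
    IntegrableOn (fun p => q p.2 * ∫ τ in φ p..b, q τ) S (volume.prod volume) :=
  integrableOn_mul_of_subset_prod measure_Ioc_lt_top.ne hS hq
    ((continuous_intervalIntegral_lower hq b).comp hφ).aestronglyMeasurable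
    (fun p => norm_intervalIntegral_le_integral_norm hq (φ p) b)

theorem setIntegral_Ioc_productTerm (hq : Integrable q) :
    ∫ x in Ioc (3 * a / 2) (5 * a / 2),
        (∫ t in (x + a / 2)..(3 * a), q t) * ∫ τ in a..(x - a / 2), q τ
      = ∫ t in Ioc a (2 * a), q t * ∫ u in (t + a)..(3 * a), ∫ τ in u..(3 * a), q τ := by
  have hS : {p : ℝ × ℝ | p.1 ∈ Ioc (3 * a / 2) (5 * a / 2) ∧ p.2 ∈ Ioo a (p.1 - a / 2)}
      = {p | p.2 ∈ Ioc a (2 * a) ∧ p.1 ∈ Ioc (p.2 + a / 2) (5 * a / 2)} := by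
    ext ⟨x, t⟩
    simp only [mem_ofPred_eq, mem_Ioc, mem_Ioo]
    constructor <;> intro h <;> refine ⟨⟨?_, ?_⟩, ?_, ?_⟩ <;>
      linarith [h.1.1, h.1.2, h.2.1, h.2.2]
  calc _ = ∫ x in Ioc (3 * a / 2) (5 * a / 2), ∫ t in Ioo a (x - a / 2),
        q t * ∫ τ in (x + a / 2)..(3 * a), q τ := by
        refine setIntegral_congr_fun measurableSet_Ioc fun x hx => ?_
        rw [integral_mul_const, ← integral_Ioc_eq_integral_Ioo,
          ← intervalIntegral.integral_of_le (by linarith [hx.1]), mul_comm]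
    _ = ∫ t in Ioc a (2 * a), ∫ x in Ioc (t + a / 2) (5 * a / 2),
        q t * ∫ τ in (x + a / 2)..(3 * a), q τ :=
      setIntegral_setIntegral_swap_of_setOf_eq
        (f := fun p => q p.2 * ∫ τ in (p.1 + a / 2)..(3 * a), q τ)
        measurableSet_Ioc (fun _ => measurableSet_Ioo) measurableSet_Ioc
        (fun _ => measurableSet_Ioc) hS (by measurability)
        (integrableOn_mul_intervalIntegral_comp (fun _ hp => ⟨hp.1, trivial⟩) hq (by fun_prop) _)
    _ = _ := by
      refine setIntegral_congr_fun measurableSet_Ioc fun t ht => ?_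
      rw [integral_const_mul, ← intervalIntegral.integral_of_le (by linarith [ht.2]),
        intervalIntegral.integral_comp_add_right (fun u => ∫ τ in u..(3 * a), q τ)]
      congr 2 <;> ring

theorem setOf_iteratedTerm_eq (a : ℝ) :
    {p : ℝ × ℝ | p.1 ∈ Ioc (3 * a / 2) (5 * a / 2) ∧ p.2 ∈ Ioc a (7 * a / 2 - p.1)}
      = {p | p.2 ∈ Ioc a (2 * a) ∧ p.1 ∈ Ioc (3 * a / 2) (7 * a / 2 - p.2)} := by
  ext ⟨x, t⟩
  simp only [mem_ofPred_eq, mem_Ioc]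
  constructor <;> intro h <;> refine ⟨⟨?_, ?_⟩, ?_, ?_⟩ <;>
    linarith [h.1.1, h.1.2, h.2.1, h.2.2]

theorem integrableOn_iteratedTerm_kernel (hq : Integrable q) :
    IntegrableOn (fun p => q p.2 * ∫ τ in (p.1 + p.2 - a / 2)..(3 * a), q τ)
      {p : ℝ × ℝ | p.1 ∈ Ioc (3 * a / 2) (5 * a / 2) ∧ p.2 ∈ Ioc a (7 * a / 2 - p.1)}
      (volume.prod volume) :=
  integrableOn_mul_intervalIntegral_comp (fun _ hp => ⟨hp.1, trivial⟩) hq (by fun_prop) _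

theorem setIntegral_Ioc_iteratedTerm (hq : Integrable q) :
    ∫ x in Ioc (3 * a / 2) (5 * a / 2),
        ∫ t in a..(7 * a / 2 - x), q t * ∫ τ in (x + t - a / 2)..(3 * a), q τ
      = ∫ t in Ioc a (2 * a), q t * ∫ u in (t + a)..(3 * a), ∫ τ in u..(3 * a), q τ := by
  calc _ = ∫ x in Ioc (3 * a / 2) (5 * a / 2), ∫ t in Ioc a (7 * a / 2 - x),
        q t * ∫ τ in (x + t - a / 2)..(3 * a), q τ := by
        refine setIntegral_congr_fun measurableSet_Ioc fun x hx => ?_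
        rw [intervalIntegral.integral_of_le (by linarith [hx.2])]
    _ = ∫ t in Ioc a (2 * a), ∫ x in Ioc (3 * a / 2) (7 * a / 2 - t),
        q t * ∫ τ in (x + t - a / 2)..(3 * a), q τ :=
      setIntegral_setIntegral_swap_of_setOf_eq measurableSet_Ioc (fun _ => measurableSet_Ioc)
        measurableSet_Ioc (fun _ => measurableSet_Ioc) (setOf_iteratedTerm_eq a)
        (by measurability) (integrableOn_iteratedTerm_kernel hq)
    _ = _ := by
      refine setIntegral_congr_fun measurableSet_Ioc fun t ht => ?_
      simp_rw [add_sub_assoc]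
      rw [integral_const_mul, ← intervalIntegral.integral_of_le (by linarith [ht.2]),
        intervalIntegral.integral_comp_add_right (fun u => ∫ τ in u..(3 * a), q τ)]
      congr 2 <;> ring

theorem intervalIntegrable_iteratedTerm (ha : 0 ≤ a) (hq : Integrable q) :
    IntervalIntegrable
      (fun x => ∫ t in a..(7 * a / 2 - x), q t * ∫ τ in (x + t - a / 2)..(3 * a), q τ)
      volume (3 * a / 2) (5 * a / 2) := by
  rw [intervalIntegrable_iff_integrableOn_Ioc_of_le (by linarith)]
  refine (IntegrableOn.setIntegral_setOf_prod_left measurableSet_Ioc (fun _ => measurableSet_Ioc)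
    (by measurability) (integrableOn_iteratedTerm_kernel hq)).congr_fun (fun x hx => ?_)
    measurableSet_Ioc
  exact (intervalIntegral.integral_of_le (by linarith [hx.2])).symm

theorem continuous_productTerm (hq : Integrable q) :
    Continuous fun x => (∫ t in (x + a / 2)..(3 * a), q t) * ∫ τ in a..(x - a / 2), q τ :=
  ((continuous_intervalIntegral_lower hq _).comp (by fun_prop)).mul
    ((hq.continuous_primitive a).comp (by fun_prop))

theorem Qfun_zero (a : ℝ) (q : ℝ → ℂ) :
    Qfun a q 0 = fun x => (∫ t in (x + a / 2)..(3 * a), q t) * (∫ τ in a..(x - a / 2), q τ)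
      - ∫ t in a..(7 * a / 2 - x), q t * ∫ τ in (x + t - a / 2)..(3 * a), q τ := by
  funext x
  rw [Qfun, pow_zero, one_mul]

theorem intervalIntegrable_Qfun_zero (ha : 0 ≤ a) (hq : Integrable q) :
    IntervalIntegrable (Qfun a q 0) volume (3 * a / 2) (5 * a / 2) := by
  rw [Qfun_zero]
  exact ((continuous_productTerm hq).intervalIntegrable _ _).sub
    (intervalIntegrable_iteratedTerm ha hq)

theorem integral_Qfun_zero (ha : 0 ≤ a) (hq : Integrable q) :
    ∫ x in (3 * a / 2)..(5 * a / 2), Qfun a q 0 x = 0 := by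
  rw [Qfun_zero, intervalIntegral.integral_sub ((continuous_productTerm hq).intervalIntegrable _ _)
      (intervalIntegrable_iteratedTerm ha hq),
    intervalIntegral.integral_of_le (by linarith), intervalIntegral.integral_of_le (by linarith),
    setIntegral_Ioc_productTerm hq, setIntegral_Ioc_iteratedTerm hq, sub_self]

theorem integral_wfun {ν : ℕ} (ha : 0 ≤ a) (hq : IntervalIntegrable q volume a (3 * a))
    (hQ : IntervalIntegrable (Qfun a q ν) volume (3 * a / 2) (5 * a / 2)) :
    ∫ x in a..(3 * a), wfun a q ν x
      = (∫ x in a..(3 * a), q x) + ∫ x in (3 * a / 2)..(5 * a / 2), Qfun a q ν x := by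
  have hw : wfun a q ν
      = fun x => q x + (Ioo (3 * a / 2) (5 * a / 2)).indicator (Qfun a q ν) x := by
    funext x
    by_cases hx : x ∈ Ioo (3 * a / 2) (5 * a / 2) <;> simp [wfun, hx]
  have hQ' : Integrable ((Ioo (3 * a / 2) (5 * a / 2)).indicator (Qfun a q ν)) :=
    (integrable_indicator_iff measurableSet_Ioo).2
      (((intervalIntegrable_iff_integrableOn_Ioc_of_le (by linarith)).1 hQ).mono_set
        Ioo_subset_Ioc_self)
  have hsub : Ioc a (3 * a) ∩ Ioo (3 * a / 2) (5 * a / 2) = Ioo (3 * a / 2) (5 * a / 2) :=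
    inter_eq_self_of_subset_right fun x hx => ⟨by linarith [hx.1], by linarith [hx.2]⟩
  rw [hw, intervalIntegral.integral_add hq hQ'.intervalIntegrable, add_right_inj,
    intervalIntegral.integral_of_le (by linarith : a ≤ 3 * a),
    setIntegral_indicator measurableSet_Ioo, hsub, ← integral_Ioc_eq_integral_Ioo,
    ← intervalIntegral.integral_of_le (by linarith : 3 * a / 2 ≤ 5 * a / 2)]

end Qfun

theorem statement12
    (a : ℝ) (ha : a ∈ Set.Ioo 0 (π / 3))
    (q : ℝ → ℂ)
    (hq2 : MemLp q 2 (volume.restrict (Set.Ioo 0 π)))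
    (hq0 : ∀ x : ℝ, x ∉ Set.Ioo a π → q x = 0)
    (hq3 : ∀ᵐ x ∂(volume.restrict (Set.Ioo (3 * a) π)), q x = 0) :
    (∫ x in a..π, q x) = (∫ x in a..(3 * a), wfun a q 0 x) ∧
    (∫ x in (3 * a / 2)..(5 * a / 2), Qfun a q 0 x) = 0 := by
  obtain ⟨ha0, haπ⟩ := ha
  have hq : Integrable q := Integrable.of_memLp_restrict measure_Ioo_lt_top.ne one_le_two
    hq2 fun x hx => hq0 x fun h => hx ⟨ha0.trans h.1, h.2⟩
  have hQ := integral_Qfun_zero ha0.le hq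
  have hq3π : ∫ x in (3 * a)..π, q x = 0 := by
    rw [intervalIntegral.integral_of_le (by linarith), integral_Ioc_eq_integral_Ioo]
    exact integral_eq_zero_of_ae hq3
  refine ⟨?_, hQ⟩
  rw [integral_wfun ha0.le hq.intervalIntegrable (intervalIntegrable_Qfun_zero ha0.le hq), hQ,
    ← intervalIntegral.integral_add_adjacent_intervals hq.intervalIntegrable hq.intervalIntegrable,
    hq3π]
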